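/- arXiv:2410.22844 — 2 statements merged into one kernel-verified Lean document; each statement's English description precedes it below -/
import Mathlib

section
/- For the Gaussian recommender system trained by gradient descent on the standard loss L(Θ) = −Σ r⟨u, v⟩ with learning rate η, there exists a positive scalar function M(t, η) (depending only on t, η, and the number of users n) such that v_t = M(t, η)·v₀ for every epoch t ≥ 1, where M(1, η) = 1 + nη. -/
/-!
Write `s t = ∑ i, r i • u i t` for the rating-weighted sum of user embeddings. Since `r i ^ 2 = 1`,
the user update gives `s (t + 1) = s t + n η • v t`, while `v (t + 1) = v t + η • s t`; and
`s 0 = n • v 0` by the choice of `v 0`. So the pair `(v t, s t)` evolves by the fixed matrix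
`[[1, η], [n η, 1]]` starting on the line of `v 0`, and both stay scalar multiples of `v 0`, with
coefficients obeying the same recursion and hence positive.
-/

open Finset

section CoupledRecursion

variable {R : Type*} [CommSemiring R]

def coupledCoeffs (α β c : R) : ℕ → R × R
  | 0 => (1, c)
  | t + 1 => ((coupledCoeffs α β c t).1 + α * (coupledCoeffs α β c t).2,
      (coupledCoeffs α β c t).2 + β * (coupledCoeffs α β c t).1)

theorem coupledCoeffs_one (α β c : R) : (coupledCoeffs α β c 1).1 = 1 + α * c := by
  simp [coupledCoeffs]

theorem coupledCoeffs_pos [PartialOrder R] [IsStrictOrderedRing R] {α β c : R}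
    (hα : 0 ≤ α) (hβ : 0 ≤ β) (hc : 0 ≤ c) (t : ℕ) :
    0 < (coupledCoeffs α β c t).1 ∧ 0 ≤ (coupledCoeffs α β c t).2 := by
  induction t with
  | zero => exact ⟨one_pos, hc⟩
  | succ t ih =>
    obtain ⟨ha, hb⟩ := ih
    exact ⟨add_pos_of_pos_of_nonneg ha (mul_nonneg hα hb),
      add_nonneg hb (mul_nonneg hβ ha.le)⟩

theorem coupled_eq_coupledCoeffs_smul {E : Type*} [AddCommMonoid E] [Module R E]
    {α β c : R} {x y : ℕ → E}
    (hx : ∀ t, x (t + 1) = x t + α • y t) (hy : ∀ t, y (t + 1) = y t + β • x t)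
    (h0 : y 0 = c • x 0) (t : ℕ) :
    x t = (coupledCoeffs α β c t).1 • x 0 ∧ y t = (coupledCoeffs α β c t).2 • x 0 := by
  induction t with
  | zero => simp [coupledCoeffs, h0]
  | succ t ih =>
    simp only [coupledCoeffs, hx, hy, ih.1, ih.2, add_smul, mul_smul, and_self]

end CoupledRecursion

theorem sum_smul_add_smul_smul {ι R E : Type*} [Fintype ι] [CommSemiring R]
    [AddCommMonoid E] [Module R E] {r : ι → R} (hr : ∀ i, r i * r i = 1)
    (w : ι → E) (η : R) (x : E) :
    ∑ i, r i • (w i + η • r i • x) = ∑ i, r i • w i + (Fintype.card ι * η) • x := by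
  have hterm : ∀ i, r i • (w i + η • r i • x) = r i • w i + η • x := fun i => by
    rw [smul_add, smul_comm η, smul_smul, hr, one_smul]
  simp only [hterm, sum_add_distrib, sum_const, card_univ, mul_smul, Nat.cast_smul_eq_nsmul]

/-- For the Gaussian recommender system trained by gradient descent on the standard loss,
there exists a positive scalar function M(t) (for fixed η) with v_t = M(t)·v₀ for all t ≥ 1
and M(1) = 1 + nη. -/
theorem item_embedding_scalar_multiple (d n : ℕ) (hn : 0 < n) (η : ℝ) (hη : 0 < η)
    (r : Fin n → ℝ) (hr : ∀ i, r i = 1 ∨ r i = -1)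
    (u : Fin n → ℕ → (Fin d → ℝ)) (v : ℕ → (Fin d → ℝ))
    (hu : ∀ i t, u i (t + 1) = u i t + η • (r i • v t))
    (hv : ∀ t, v (t + 1) = v t + η • ∑ i, r i • u i t)
    (hv0 : v 0 = ((n : ℝ))⁻¹ • ∑ i, r i • u i 0) :
    ∃ M : ℕ → ℝ, M 1 = 1 + (n : ℝ) * η ∧ ∀ t ≥ 1, 0 < M t ∧ v t = M t • v 0 := by
  have hr_sq : ∀ i, r i * r i = 1 := fun i => by rcases hr i with h | h <;> simp [h]
  have hs : ∀ t, ∑ i, r i • u i (t + 1) = ∑ i, r i • u i t + ((n : ℝ) * η) • v t := fun t => by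
    simpa only [hu, Fintype.card_fin] using sum_smul_add_smul_smul hr_sq (u · t) η (v t)
  have hs0 : ∑ i, r i • u i 0 = (n : ℝ) • v 0 := by
    rw [hv0, smul_inv_smul₀ (by positivity)]
  have hcoeff := coupledCoeffs_pos hη.le (by positivity : (0 : ℝ) ≤ n * η) n.cast_nonneg
  refine ⟨fun t => (coupledCoeffs η (n * η) (n : ℝ) t).1, (coupledCoeffs_one _ _ _).trans (by ring),
    fun t _ => ⟨(hcoeff t).1, (coupled_eq_coupledCoeffs_smul hv hs hs0 t).1⟩⟩
end

section
/- Under one adversarial gradient step with learning rate η, adversarial weight λ > 0, and perturbation magnitude ε, the user embedding updates as u_{(t+1)} = (1 − ηλε/‖u_{(t)}‖)·u_{(t)} + η(1+λ)·r·v_{(t)}. In particular, if ε < ‖u_{(t)}‖/(ηλ), the coefficient (1 − ηλε/‖u_{(t)}‖) lies strictly in (0, 1), so the factor γ = (1 − ηλε/‖u_{(t)}‖)^{−1} satisfies γ > 1. -/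
theorem adversarial_step_eq {𝕜 E : Type*} [Field 𝕜] [AddCommGroup E] [Module 𝕜 E]
    (u v : E) (η lam ε r c : 𝕜) (hr : r * r = 1) :
    u - η • ((-r) • v + lam • ((-r) • (v + (-(ε * r) / c) • u))) =
      (1 - η * lam * ε / c) • u + (η * (1 + lam) * r) • v := by
  have hcoef : η * (lam * (-r * (-(ε * r) / c))) = η * lam * ε / c := by
    linear_combination (η * lam * ε / c) * hr
  rw [← hcoef]
  module

theorem mul_div_mem_Ioo_of_lt_div {k ε c : ℝ} (hk : 0 < k) (hε : 0 < ε) (h : ε < c / k) :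
    0 < k * ε / c ∧ k * ε / c < 1 := by
  have hkε : k * ε < c := by rwa [lt_div_iff₀ hk, mul_comm] at h
  have hc : 0 < c := (mul_pos hk hε).trans hkε
  exact ⟨div_pos (mul_pos hk hε) hc, (div_lt_one hc).mpr hkε⟩

theorem one_sub_mem_Ioo_and_one_lt_inv {a : ℝ} (h0 : 0 < a) (h1 : a < 1) :
    0 < 1 - a ∧ 1 - a < 1 ∧ 1 < (1 - a)⁻¹ :=
  ⟨sub_pos.mpr h1, sub_lt_self 1 h0, one_lt_inv₀ (sub_pos.mpr h1) |>.mpr (sub_lt_self 1 h0)⟩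

theorem adversarial_user_update_general (d : ℕ) (u v : EuclideanSpace ℝ (Fin d))
    (η lam ε r : ℝ) (hη : 0 < η) (hlam : 0 < lam) (hε : 0 < ε) (hr : r = 1 ∨ r = -1)
    (u' : EuclideanSpace ℝ (Fin d))
    (hupd : u' = u - η • ((-r) • v + lam • ((-r) • (v + (-(ε * r) / ‖u‖) • u)))) :
    u' = (1 - η * lam * ε / ‖u‖) • u + (η * (1 + lam) * r) • v ∧
      (ε < ‖u‖ / (η * lam) →
        0 < 1 - η * lam * ε / ‖u‖ ∧ 1 - η * lam * ε / ‖u‖ < 1 ∧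
          1 < (1 - η * lam * ε / ‖u‖)⁻¹) := by
  have hr2 : r * r = 1 := by rcases hr with rfl | rfl <;> norm_num
  refine ⟨hupd.trans (adversarial_step_eq u v η lam ε r ‖u‖ hr2), fun hlt => ?_⟩
  obtain ⟨hpos, hlt1⟩ := mul_div_mem_Ioo_of_lt_div (mul_pos hη hlam) hε hlt
  exact one_sub_mem_Ioo_and_one_lt_inv hpos hlt1

/-- One adversarial gradient step with step η, adversarial weight λ, and magnitude ε gives
u_(t+1) = (1 − ηλε/‖u‖)·u + η(1+λ)·r·v; moreover if ε < ‖u‖/(ηλ) then the coefficient lies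
strictly in (0,1) and γ = (1 − ηλε/‖u‖)⁻¹ > 1. -/
theorem adversarial_user_update (d : ℕ) (u v : EuclideanSpace ℝ (Fin d)) (hu : u ≠ 0)
    (η lam ε r : ℝ) (hη : 0 < η) (hlam : 0 < lam) (hε : 0 < ε) (hr : r = 1 ∨ r = -1)
    (u' : EuclideanSpace ℝ (Fin d))
    (hupd : u' = u - η • ((-r) • v + lam • ((-r) • (v + (-(ε * r) / ‖u‖) • u)))) :
    u' = (1 - η * lam * ε / ‖u‖) • u + (η * (1 + lam) * r) • v ∧
      (ε < ‖u‖ / (η * lam) →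
        0 < 1 - η * lam * ε / ‖u‖ ∧ 1 - η * lam * ε / ‖u‖ < 1 ∧
          1 < (1 - η * lam * ε / ‖u‖)⁻¹) :=
  adversarial_user_update_general d u v η lam ε r hη hlam hε hr u' hupd
end
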